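/- arXiv:1908.06302 — 3 statements merged into one kernel-verified Lean document; each statement's English description precedes it below -/
import Mathlib

section
/- For every Borel-measurable function f : ℝ → ℝ and every ε > 0, there exists a continuous function g : ℝ → ℝ such that the Lebesgue measure of the set {x : ℝ | f x ≠ g x} is less than ε. -/
open MeasureTheory Set

lemma lusin_open_approx (A : Set ℝ) (hA : MeasurableSet A) {δ : ENNReal} (hδ : δ ≠ 0) :
    ∃ U : Set ℝ, A ⊆ U ∧ IsOpen U ∧ volume (U \ A) < δ := by
  obtain ⟨δ', hδ'pos, hδ'sum⟩ := ENNReal.exists_pos_sum_of_countable' hδ ℕ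
  have key : ∀ k : ℕ, ∃ U : Set ℝ, (A ∩ Ioo (-(k + 1 : ℝ)) (k + 1)) ⊆ U ∧ IsOpen U ∧
      volume (U \ (A ∩ Ioo (-(k + 1 : ℝ)) (k + 1))) < δ' k := by
    intro k
    obtain ⟨W, hW, hWo, -, hWv⟩ := (hA.inter measurableSet_Ioo).exists_isOpen_diff_lt
      (μ := volume) ((measure_mono inter_subset_right).trans_lt measure_Ioo_lt_top).ne
      (hδ'pos k).ne'
    exact ⟨W, hW, hWo, hWv⟩
  choose U hAU hUo hU using key
  refine ⟨⋃ k, U k, ?_, isOpen_iUnion hUo, ?_⟩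
  · intro x hx
    obtain ⟨k, hk⟩ := exists_nat_gt |x|
    have : x ∈ Ioo (-(k + 1 : ℝ)) (k + 1) := by
      have : |x| < k + 1 := hk.trans (by linarith)
      exact abs_lt.mp this |>.imp (fun h => h) (fun h => h) |> fun h => ⟨h.1, h.2⟩
    exact mem_iUnion.2 ⟨k, hAU k ⟨hx, this⟩⟩
  · calc volume ((⋃ k, U k) \ A) ≤ ∑' k, volume (U k \ A) := by
          rw [iUnion_diff]; exact measure_iUnion_le _
      _ ≤ ∑' k, δ' k := by
          refine ENNReal.tsum_le_tsum fun k => ?_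
          refine le_trans (measure_mono ?_) (hU k).le
          exact diff_subset_diff_right inter_subset_left
      _ < δ := hδ'sum

lemma lusin_closed_approx (A : Set ℝ) (hA : MeasurableSet A) {δ : ENNReal} (hδ : δ ≠ 0) :
    ∃ F : Set ℝ, F ⊆ A ∧ IsClosed F ∧ volume (A \ F) < δ := by
  obtain ⟨U, hU, hUo, hUv⟩ := lusin_open_approx Aᶜ hA.compl hδ
  refine ⟨Uᶜ, compl_subset_comm.mp hU, hUo.isClosed_compl, ?_⟩
  have : A \ Uᶜ = U \ Aᶜ := by ext x; simp [and_comm]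
  rw [this]; exact hUv

/-- Lusin's Theorem (strong form on all of ℝ). -/
theorem lusin_strong (f : ℝ → ℝ) (hf : Measurable f) (ε : ℝ) (hε : 0 < ε) :
    ∃ g : ℝ → ℝ, Continuous g ∧ volume {x : ℝ | f x ≠ g x} < ENNReal.ofReal ε := by
  have hε' : (ENNReal.ofReal ε) ≠ 0 := by simp [hε]
  obtain ⟨δ, hδpos, hδsum⟩ := ENNReal.exists_pos_sum_of_countable' hε' (ℚ × ℚ)
  -- basic open sets indexed by pairs of rationals
  set V : ℚ × ℚ → Set ℝ := fun p => Ioo (p.1 : ℝ) (p.2 : ℝ) with hV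
  have hhalf : ∀ i : ℚ × ℚ, δ i / 2 ≠ 0 := fun i =>
    (ENNReal.div_pos (hδpos i).ne' (by norm_num)).ne'
  have hAi : ∀ i : ℚ × ℚ, MeasurableSet (f ⁻¹' V i) := fun i => hf measurableSet_Ioo
  choose U hAU hUo hUv using fun i => lusin_open_approx (f ⁻¹' V i) (hAi i) (hhalf i)
  choose F hFA hFc hFv using fun i => lusin_closed_approx (f ⁻¹' V i) (hAi i) (hhalf i)
  set G : Set ℝ := ⋃ i, (U i \ F i) with hG
  have hGopen : IsOpen G := isOpen_iUnion fun i => (hUo i).sdiff (hFc i)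
  have hGvol : volume G < ENNReal.ofReal ε := by
    calc volume G ≤ ∑' i, volume (U i \ F i) := measure_iUnion_le _
      _ ≤ ∑' i, δ i := by
          refine ENNReal.tsum_le_tsum fun i => ?_
          have hsub : U i \ F i ⊆ (U i \ f ⁻¹' V i) ∪ (f ⁻¹' V i \ F i) := by
            intro x hx
            by_cases h : x ∈ f ⁻¹' V i
            · exact Or.inr ⟨h, hx.2⟩
            · exact Or.inl ⟨hx.1, h⟩
          calc volume (U i \ F i) ≤ volume (U i \ f ⁻¹' V i) + volume (f ⁻¹' V i \ F i) :=
                (measure_mono hsub).trans (measure_union_le _ _)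
            _ ≤ δ i / 2 + δ i / 2 := add_le_add (hUv i).le (hFv i).le
            _ = δ i := ENNReal.add_halves _
      _ < ENNReal.ofReal ε := hδsum
  set E : Set ℝ := Gᶜ with hE
  have hEclosed : IsClosed E := hGopen.isClosed_compl
  -- on E, the preimage of each basic set agrees with an open set
  have hkey : ∀ i, f ⁻¹' V i ∩ E = U i ∩ E := by
    intro i
    apply Subset.antisymm
    · exact inter_subset_inter_left _ (hAU i)
    · rintro x ⟨hxU, hxE⟩
      have hxF : x ∈ F i := by
        by_contra hxF
        exact hxE (mem_iUnion.2 ⟨i, hxU, hxF⟩)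
      exact ⟨hFA i hxF, hxE⟩
  have hcont : ContinuousOn f E := by
    intro x hxE
    intro s hs
    rw [Filter.mem_map]
    rw [mem_nhds_iff] at hs
    obtain ⟨t, hts, hto, hxt⟩ := hs
    obtain ⟨a, b, hab, hsub⟩ : ∃ a b : ℚ, f x ∈ Ioo (a : ℝ) (b : ℝ) ∧ Ioo (a : ℝ) (b : ℝ) ⊆ t := by
      obtain ⟨r, hr, hrt⟩ := Metric.mem_nhds_iff.mp (hto.mem_nhds hxt)
      obtain ⟨a, ha1, ha2⟩ := exists_rat_btwn (show f x - r < f x by linarith)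
      obtain ⟨b, hb1, hb2⟩ := exists_rat_btwn (show f x < f x + r by linarith)
      refine ⟨a, b, ⟨ha2, hb1⟩, fun y hy => hrt ?_⟩
      rw [Metric.mem_ball, Real.dist_eq, abs_lt]
      constructor <;> [linarith [hy.1]; linarith [hy.2]]
    have hxUi : x ∈ U (a, b) ∩ E := by
      rw [← hkey (a, b)]; exact ⟨hab, hxE⟩
    have : U (a, b) ∈ nhdsWithin x E := mem_nhdsWithin_of_mem_nhds ((hUo _).mem_nhds hxUi.1)
    refine Filter.mem_of_superset (Filter.inter_mem this self_mem_nhdsWithin) ?_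
    rintro y ⟨hyU, hyE⟩
    have : y ∈ f ⁻¹' V (a, b) := ((hkey (a, b)).symm ▸ ⟨hyU, hyE⟩ : y ∈ f ⁻¹' V (a, b) ∩ E).1
    exact hts (hsub this)
  -- Tietze extension
  obtain ⟨g, hg⟩ := ContinuousMap.exists_restrict_eq (Y := ℝ) hEclosed
    ⟨E.restrict f, hcont.restrict⟩
  refine ⟨g, g.continuous, lt_of_le_of_lt (measure_mono ?_) hGvol⟩
  intro x hx
  by_contra hxG
  have hxE : x ∈ E := hxG
  have := congrFun (congrArg ContinuousMap.toFun hg) ⟨x, hxE⟩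
  exact hx this.symm
end

section
/- For every Borel-measurable function f : ℝ → ℝ ∪ {±∞} (i.e., f : ℝ → EReal or f : ℝ → ℝ∞ with possible infinite values) and every ε > 0, there exists a continuous function g : ℝ → ℝ ∪ {±∞} such that μ({x | f x ≠ g x}) < ε, and moreover g x is infinite only at points x where f x is infinite. -/
/-!
For every basic open set `V` of a second countable space, squeeze `f ⁻¹' V` between a closed
and an open set whose difference has small measure (regularity of a σ-finite outer regular
measure). Off the union `E` of these differences every `f ⁻¹' V` is relatively open, so `f` is
continuous on the closed set `Eᶜ`, whose complement is small. To extend `f : ℝ → EReal` from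
`Eᶜ`, transport it to `[-1, 1]` by an order isomorphism, extend by Tietze, and multiply by
`1 - φ`, where `φ : ℝ → [0, 1]` vanishes exactly on `Eᶜ`: the extension then avoids `±1`, that
is `±∞`, off `Eᶜ`.
-/

open MeasureTheory Set
open scoped ENNReal

section Regularity

variable {X : Type*} [TopologicalSpace X] [MeasurableSpace X] {μ : Measure X}
  [μ.OuterRegular] [SigmaFinite μ]

theorem MeasurableSet.exists_isOpen_sdiff_lt_of_sigmaFinite {A : Set X}
    (hA : MeasurableSet A) {ε : ℝ≥0∞} (hε : ε ≠ 0) :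
    ∃ U, U ⊇ A ∧ IsOpen U ∧ μ (U \ A) < ε := by
  obtain ⟨δ, hδ, hδε⟩ := ENNReal.exists_pos_sum_of_countable' hε ℕ
  have hfin (n : ℕ) : μ (A ∩ spanningSets μ n) ≠ ∞ :=
    (measure_mono inter_subset_right).trans_lt (measure_spanningSets_lt_top μ n) |>.ne
  choose U hAU hU hμU using fun n ↦
    (hA.inter (measurableSet_spanningSets μ n)).exists_isOpen_sdiff_lt (hfin n) (hδ n).ne'
  refine ⟨⋃ n, U n, ?_, isOpen_iUnion hU, ?_⟩
  · calc A = ⋃ n, A ∩ spanningSets μ n := by rw [← inter_iUnion, iUnion_spanningSets, inter_univ]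
      _ ⊆ ⋃ n, U n := iUnion_mono hAU
  · calc μ ((⋃ n, U n) \ A) ≤ μ (⋃ n, U n \ (A ∩ spanningSets μ n)) := by
          gcongr
          rw [iUnion_sdiff]
          exact iUnion_mono fun n ↦ sdiff_subset_sdiff_right inter_subset_left
      _ ≤ ∑' n, μ (U n \ (A ∩ spanningSets μ n)) := measure_iUnion_le _
      _ ≤ ∑' n, δ n := ENNReal.tsum_le_tsum fun n ↦ (hμU n).2.le
      _ < ε := hδε

theorem MeasurableSet.exists_isClosed_isOpen_sdiff_lt [OpensMeasurableSpace X] {A : Set X}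
    (hA : MeasurableSet A) {ε : ℝ≥0∞} (hε : ε ≠ 0) :
    ∃ C U, IsClosed C ∧ IsOpen U ∧ C ⊆ A ∧ A ⊆ U ∧ μ (U \ C) < ε := by
  obtain ⟨U, hAU, hU, hμU⟩ := hA.exists_isOpen_sdiff_lt_of_sigmaFinite (μ := μ)
    (ENNReal.half_pos hε).ne'
  obtain ⟨W, hAW, hW, hμW⟩ := hA.compl.exists_isOpen_sdiff_lt_of_sigmaFinite (μ := μ)
    (ENNReal.half_pos hε).ne'
  refine ⟨Wᶜ, U, hW.isClosed_compl, hU, compl_subset_comm.1 hAW, hAU, ?_⟩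
  calc μ (U \ Wᶜ) ≤ μ ((U \ A) ∪ (W \ Aᶜ)) := by
        gcongr
        intro x ⟨hxU, hxW⟩
        by_cases hxA : x ∈ A
        · exact Or.inr ⟨not_not.1 hxW, not_not.2 hxA⟩
        · exact Or.inl ⟨hxU, hxA⟩
    _ ≤ μ (U \ A) + μ (W \ Aᶜ) := measure_union_le _ _
    _ < ε / 2 + ε / 2 := ENNReal.add_lt_add hμU hμW
    _ = ε := ENNReal.add_halves ε

theorem Measurable.exists_isClosed_measure_compl_lt_continuousOn [OpensMeasurableSpace X]
    {Y : Type*} [TopologicalSpace Y] [MeasurableSpace Y] [OpensMeasurableSpace Y]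
    [SecondCountableTopology Y] {f : X → Y} (hf : Measurable f) {ε : ℝ≥0∞} (hε : ε ≠ 0) :
    ∃ F, IsClosed F ∧ μ Fᶜ < ε ∧ ContinuousOn f F := by
  set B := TopologicalSpace.countableBasis Y
  have hB := TopologicalSpace.isBasis_countableBasis Y
  have : Countable B := (TopologicalSpace.countable_countableBasis Y).to_subtype
  obtain ⟨δ, hδ, hδε⟩ := ENNReal.exists_pos_sum_of_countable' hε B
  choose C U hC hU hCf hfU hμ using fun V : B ↦
    (hf (hB.isOpen V.2).measurableSet).exists_isClosed_isOpen_sdiff_lt (μ := μ) (hδ V).ne'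
  refine ⟨(⋃ V, U V \ C V)ᶜ, (isOpen_iUnion fun V ↦ (hU V).sdiff (hC V)).isClosed_compl, ?_, ?_⟩
  · calc μ (⋃ V, U V \ C V)ᶜᶜ ≤ ∑' V, μ (U V \ C V) := by rw [compl_compl]; exact measure_iUnion_le _
      _ ≤ ∑' V, δ V := ENNReal.tsum_le_tsum fun V ↦ (hμ V).le
      _ < ε := hδε
  · rw [continuousOn_iff_continuous_domRestrict, hB.continuous_iff]
    intro V hV
    -- off the exceptional set, `f ⁻¹' V` agrees with the open set `U V`
    convert (hU ⟨V, hV⟩).preimage continuous_subtype_val using 1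
    ext ⟨x, hx⟩
    refine ⟨fun h ↦ hfU ⟨V, hV⟩ h, fun h ↦ hCf ⟨V, hV⟩ ?_⟩
    by_contra hxC
    exact hx (mem_iUnion.2 ⟨⟨V, hV⟩, h, hxC⟩)

end Regularity

theorem ContinuousOn.exists_extension_mem_Icc_mem_Ioo_off {X : Type*} [TopologicalSpace X]
    [PerfectlyNormalSpace X] {s : Set X} (hs : IsClosed s) {f : X → ℝ} (hf : ContinuousOn f s)
    (hfs : ∀ x ∈ s, f x ∈ Icc (-1) 1) :
    ∃ g : C(X, ℝ), EqOn g f s ∧ (∀ x, g x ∈ Icc (-1) 1) ∧ ∀ x ∉ s, g x ∈ Ioo (-1) 1 := by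
  obtain ⟨G, hG, hGf⟩ := ContinuousMap.exists_restrict_eq_forall_mem_of_closed
    ⟨s.domRestrict f, hf.domRestrict⟩ (fun x ↦ hfs x x.2) (nonempty_Icc.2 (by norm_num)) hs
  obtain ⟨φ, rfl, hφ⟩ := perfectlyNormalSpace_iff_forall_isClosed_preimage_zero.1 ‹_› s hs
  have hg (x : X) : |(1 - φ x) * G x| ≤ 1 - φ x := by
    rw [abs_mul, abs_of_nonneg (sub_nonneg.2 (hφ x).2)]
    exact mul_le_of_le_one_right (sub_nonneg.2 (hφ x).2) (abs_le.2 (hG x))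
  refine ⟨(1 - φ) * G, fun x hx ↦ ?_, fun x ↦ ?_, fun x hx ↦ ?_⟩
  · have hx' : φ x = 0 := hx
    simpa [hx'] using congr($hGf ⟨x, hx⟩)
  · exact abs_le.1 ((hg x).trans (by linarith [(hφ x).1]))
  · exact abs_lt.1 ((hg x).trans_lt (by linarith [lt_of_le_of_ne (hφ x).1 (Ne.symm hx)]))

namespace EReal

private noncomputable def toIccNegOneOne : EReal → Icc (-1 : ℝ) 1 :=
  EReal.rec ⟨-1, by norm_num⟩ (fun r ↦ inclusion Ioo_subset_Icc_self (orderIsoIooNegOneOne ℝ r))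
    ⟨1, by norm_num⟩

private theorem strictMono_toIccNegOneOne : StrictMono toIccNegOneOne := by
  intro a b hab
  induction a <;> induction b <;>
    simp_all [toIccNegOneOne, ← Subtype.coe_lt_coe, (orderIsoIooNegOneOne ℝ _).2.1,
      (orderIsoIooNegOneOne ℝ _).2.2]
  exact (orderIsoIooNegOneOne ℝ).strictMono hab

private theorem surjective_toIccNegOneOne : Function.Surjective toIccNegOneOne := by
  rintro ⟨t, ht₁, ht₂⟩
  rcases ht₁.eq_or_lt with rfl | ht₁
  · exact ⟨⊥, rfl⟩
  rcases ht₂.eq_or_lt with rfl | ht₂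
  · exact ⟨⊤, rfl⟩
  exact ⟨(orderIsoIooNegOneOne ℝ).symm ⟨t, ht₁, ht₂⟩, by simp [toIccNegOneOne]⟩

noncomputable def orderIsoIccNegOneOne : EReal ≃o Icc (-1 : ℝ) 1 :=
  StrictMono.orderIsoOfSurjective _ strictMono_toIccNegOneOne surjective_toIccNegOneOne

theorem orderIsoIccNegOneOne_mem_Ioo_iff {x : EReal} :
    (orderIsoIccNegOneOne x : ℝ) ∈ Ioo (-1) 1 ↔ x ≠ ⊥ ∧ x ≠ ⊤ := by
  induction x <;> simp [orderIsoIccNegOneOne, toIccNegOneOne, (orderIsoIooNegOneOne ℝ _).2]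

end EReal

theorem ContinuousOn.exists_ereal_extension_finite_off {X : Type*} [TopologicalSpace X]
    [PerfectlyNormalSpace X] {s : Set X} (hs : IsClosed s) {f : X → EReal}
    (hf : ContinuousOn f s) :
    ∃ g : X → EReal, Continuous g ∧ EqOn g f s ∧ ∀ x ∉ s, g x ≠ ⊥ ∧ g x ≠ ⊤ := by
  let e := EReal.orderIsoIccNegOneOne
  have he : ContinuousOn (fun x ↦ (e (f x) : ℝ)) s :=
    continuous_subtype_val.comp_continuousOn (e.continuous.comp_continuousOn hf)
  obtain ⟨u, hus, huIcc, huIoo⟩ :=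
    he.exists_extension_mem_Icc_mem_Ioo_off hs fun x _ ↦ (e (f x)).2
  refine ⟨fun x ↦ e.symm ⟨u x, huIcc x⟩, e.symm.continuous.comp (u.continuous.subtype_mk _),
    fun x hx ↦ e.symm_apply_eq.2 (Subtype.ext (hus hx)), fun x hx ↦ ?_⟩
  rw [← EReal.orderIsoIccNegOneOne_mem_Ioo_iff, OrderIso.apply_symm_apply]
  exact huIoo x hx

/-- Extended-real-valued Lusin's Theorem. -/
theorem lusin_ereal (f : ℝ → EReal) (hf : Measurable f) (ε : ℝ) (hε : 0 < ε) :
    ∃ g : ℝ → EReal, Continuous g ∧ volume {x : ℝ | f x ≠ g x} < ENNReal.ofReal ε ∧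
      ∀ x : ℝ, (g x = ⊤ ∨ g x = ⊥) → (f x = ⊤ ∨ f x = ⊥) := by
  obtain ⟨F, hF, hFε, hfF⟩ :=
    hf.exists_isClosed_measure_compl_lt_continuousOn (μ := volume) (ENNReal.ofReal_pos.2 hε).ne'
  obtain ⟨g, hg, hgf, hg_fin⟩ := hfF.exists_ereal_extension_finite_off hF
  have hfg : {x | f x ≠ g x} ⊆ Fᶜ := fun x hx hxF ↦ hx (hgf hxF).symm
  refine ⟨g, hg, (measure_mono hfg).trans_lt hFε, fun x hx ↦ ?_⟩
  by_cases hxF : x ∈ F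
  · rwa [← hgf hxF]
  · have := hg_fin x hxF
    tauto
end

section
/- Let a = q_j and b = q_k be rationals with 0 ≤ a < b ≤ 1 such that every rational q_i in the open interval (a,b) has index i > max(j,k), and let l be the least index with q_l ∈ (a,b). Define the finite binary strings λ_{a,b} and ρ_{a,b} of length l by λ_{a,b}(i) = 1 iff q_i ≤ a, and ρ_{a,b}(i) = 1 iff q_i ≥ b. Then for any real x ∈ (0,1): x ∈ (a,b) if and only if λ_{a,b} is an initial segment of the characteristic function of L_x = {i | q_i < x} and ρ_{a,b} is an initial segment of the characteristic function of R_x = {i | q_i > x}. -/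
/-- The strings `λ_{a,b}` and `ρ_{a,b}`: for an injective enumeration `q` of the rationals
of `(0,1)`, with `a = q j < b = q k` such that every rational of `(a,b)` has index beyond
`max j k` and `l` least with `q l ∈ (a,b)`, a real `x ∈ (0,1)` lies in `(a,b)` iff the
length-`l` strings `λ_{a,b}, ρ_{a,b}` are initial segments of the characteristic functions
of the cuts `L_x`, `R_x`. -/
theorem interval_iff_initial_segments
    (q : ℕ → ℚ) (hinj : Function.Injective q)
    (hrange : ∀ i, q i ∈ Set.Ioo (0 : ℚ) 1)
    (hsurj : ∀ r : ℚ, r ∈ Set.Ioo (0 : ℚ) 1 → ∃ i, q i = r)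
    (j k : ℕ) (a b : ℚ) (ha : a = q j) (hb : b = q k)
    (h0 : 0 ≤ a) (hab : a < b) (h1 : b ≤ 1)
    (hidx : ∀ i, q i ∈ Set.Ioo a b → i > max j k)
    (l : ℕ) (hl : q l ∈ Set.Ioo a b) (hlmin : ∀ i, i < l → q i ∉ Set.Ioo a b)
    (lam rho : ℕ → Bool)
    (hlam : ∀ i, i < l → (lam i = true ↔ q i ≤ a))
    (hrho : ∀ i, i < l → (rho i = true ↔ b ≤ q i)) :
    ∀ x : ℝ, x ∈ Set.Ioo (0 : ℝ) 1 →
      (x ∈ Set.Ioo (a : ℝ) (b : ℝ) ↔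
        ∀ i, i < l → (lam i = true ↔ (q i : ℝ) < x) ∧ (rho i = true ↔ x < (q i : ℝ))) := by
  intro x hx
  have hjl : j < l := lt_of_le_of_lt (le_max_left j k) (hidx l hl)
  have hkl : k < l := lt_of_le_of_lt (le_max_right j k) (hidx l hl)
  constructor
  · rintro ⟨hax, hxb⟩ i hil
    have hout : q i ≤ a ∨ b ≤ q i := by
      have := hlmin i hil
      simp only [Set.mem_Ioo, not_and_or, not_lt] at this
      exact this
    constructor
    · rw [hlam i hil]
      constructor
      · intro h
        calc ((q i : ℝ)) ≤ (a : ℝ) := by exact_mod_cast h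
          _ < x := hax
      · intro h
        rcases hout with h1 | h2
        · exact h1
        · exfalso
          have : x < (q i : ℝ) := lt_of_lt_of_le hxb (by exact_mod_cast h2)
          exact absurd h (not_lt.2 this.le)
    · rw [hrho i hil]
      constructor
      · intro h
        calc x < (b : ℝ) := hxb
          _ ≤ (q i : ℝ) := by exact_mod_cast h
      · intro h
        rcases hout with h1 | h2
        · exfalso
          have : (q i : ℝ) < x := lt_of_le_of_lt (by exact_mod_cast h1) hax
          exact absurd h (not_lt.2 this.le)
        · exact h2
  · intro h
    have h1 := (h j hjl).1
    have h2 := (h k hkl).2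
    have hlamj : lam j = true := (hlam j hjl).2 (by rw [ha])
    have hrhok : rho k = true := (hrho k hkl).2 (by rw [hb])
    constructor
    · have := h1.1 hlamj
      rwa [← ha] at this
    · have := h2.1 hrhok
      rwa [← hb] at this
end
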